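/- arXiv:1405.5428 — 2 statements merged into one kernel-verified Lean document; each statement's English description precedes it below -/
import Mathlib

section
/- Let d ≥ 1 and let W : ℝ^d → ℝ ∪ {+∞} satisfy Hypotheses (H1)–(H5). If there exists a global minimiser ρ ∈ P(ℝ^d) of the interaction energy E, then ρ is compactly supported. -/
open MeasureTheory Filter Metric
open scoped ENNReal

/-- `ℝ^d` with the Euclidean structure. -/
abbrev Ed (d : ℕ) : Type := EuclideanSpace ℝ (Fin d)

/-- The positive part of an extended real number, as an element of `ℝ≥0∞`. -/
noncomputable def EReal.posPart (x : EReal) : ℝ≥0∞ := (x ⊔ 0).abs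

/-- The integral of an `EReal`-valued function, defined as the difference (in `EReal`)
of the lower integrals of the positive and the negative parts. -/
noncomputable def eInt {α : Type*} [MeasurableSpace α] (μ : Measure α) (f : α → EReal) :
    EReal :=
  ((∫⁻ x, (f x).posPart ∂μ : ℝ≥0∞) : EReal) - ((∫⁻ x, (-f x).posPart ∂μ : ℝ≥0∞) : EReal)

/-- The interaction energy `E(ρ) = (1/2) ∬ W(x-y) dρ(x) dρ(y)`, with values in `EReal`. -/
noncomputable def energy {d : ℕ} (W : Ed d → EReal) (ρ : Measure (Ed d)) : EReal :=
  ((1 / 2 : ℝ) : EReal) * eInt (ρ.prod ρ) (fun p => W (p.1 - p.2))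

/-- The support of a measure: the set of points all of whose open neighbourhoods have
positive measure. -/
def msupport {α : Type*} [TopologicalSpace α] [MeasurableSpace α] (μ : Measure α) : Set α :=
  {x | ∀ U : Set α, IsOpen U → x ∈ U → 0 < μ U}

/-- `ρ ∈ P_R(ℝ^d)`: the support of `ρ` is contained in the closed ball `B̄(0,R)`. -/
def InBall {d : ℕ} (ρ : Measure (Ed d)) (R : ℝ) : Prop :=
  msupport ρ ⊆ Metric.closedBall (0 : Ed d) R

/-- `ρ` is a global minimiser of the interaction energy on `P(ℝ^d)`. -/
def IsMinimiser {d : ℕ} (W : Ed d → EReal) (ρ : Measure (Ed d)) : Prop :=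
  IsProbabilityMeasure ρ ∧
    ∀ μ : Measure (Ed d), IsProbabilityMeasure μ → energy W ρ ≤ energy W μ

/-- `ρ` is a global minimiser of the interaction energy on `P_R(ℝ^d)`. -/
def IsMinimiserOn {d : ℕ} (W : Ed d → EReal) (ρ : Measure (Ed d)) (R : ℝ) : Prop :=
  IsProbabilityMeasure ρ ∧ InBall ρ R ∧
    ∀ μ : Measure (Ed d), IsProbabilityMeasure μ → InBall μ R → energy W ρ ≤ energy W μ

/-!
Shifting `W` by its lower bound turns the energy of a probability measure `μ` into an increasing
affine function of the nonnegative pair interaction `J(μ) = ∬ (W(x - y) - W_min)₊ dμ(x) dμ(y)`,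
so `ρ` also minimises `J`. Instability gives a constant `κ > J(ρ)` with `W(z) - W_min ≥ κ` for
all large `|z|`. If `ρ` charged the complement of a large ball `S`, comparing `ρ` with its
normalised restriction `ρ(· | S)` would give `ρ(S)² J(ρ) ≤ ∬_{S×S}`, while the pairs between
`Sᶜ` and a smaller ball `B`, at distance beyond the range where `W` may stay below `κ`, add at
least `2κ ρ(B) ρ(Sᶜ)`. Together these force `κ ρ(B) ≤ J(ρ)`, false once `ρ(B)` is close to `1`.
-/

open ProbabilityTheory Bornology Topology

lemma EReal.posPart_eq_toENNReal (x : EReal) : x.posPart = x.toENNReal := by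
  rcases le_total x 0 with hx | hx
  · simp [EReal.posPart, hx]
  · apply EReal.coe_ennreal_injective
    rw [EReal.posPart, sup_eq_left.2 hx, EReal.coe_toENNReal hx]
    induction x with
    | bot => simp at hx
    | coe r => rw [EReal.coe_abs, abs_of_nonneg (by exact_mod_cast hx)]
    | top => simp

lemma EReal.toENNReal_add_ofReal_neg {y : EReal} {b : ℝ} (hb : b ≤ 0) (hy : (b : EReal) ≤ y) :
    y.toENNReal + ENNReal.ofReal (-b) = (y - b).toENNReal + (-y).toENNReal := by
  induction y with
  | bot => simp at hy
  | coe r =>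
    have hbr : b ≤ r := by exact_mod_cast hy
    rw [← EReal.coe_sub, ← EReal.coe_neg]
    simp only [EReal.real_coe_toENNReal]
    rcases le_total 0 r with hr | hr
    · rw [ENNReal.ofReal_of_nonpos (neg_nonpos.2 hr), add_zero,
        ← ENNReal.ofReal_add hr (by linarith)]
      ring_nf
    · rw [ENNReal.ofReal_of_nonpos hr, zero_add,
        ← ENNReal.ofReal_add (by linarith) (by linarith)]
      ring_nf
  | top => simp

lemma EReal.coe_ennreal_sub_eq_of_add_eq {p i n c : ℝ≥0∞} (hn : n ≠ ⊤) (hc : c ≠ ⊤)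
    (h : p + c = i + n) : (p : EReal) - n = i - c := by
  have h' := congrArg ((↑) : ℝ≥0∞ → EReal) h
  rw [EReal.coe_ennreal_add, EReal.coe_ennreal_add] at h'
  rw [← EReal.coe_ennreal_toReal hn, ← EReal.coe_ennreal_toReal hc] at h' ⊢
  generalize (p : EReal) = x, (i : EReal) = y at h' ⊢
  induction x <;> induction y <;> norm_cast at h' ⊢
  all_goals
    first | linarith | simp only [EReal.top_add_coe, EReal.coe_ne_top, EReal.top_ne_coe] at h'

lemma EReal.strictMono_coe_mul_add_coe {c : ℝ} (hc : 0 < c) (b : ℝ) :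
    StrictMono fun x : EReal => (c : EReal) * (x + b) := by
  intro x y hxy
  by_contra! h
  have h' := mul_le_mul_of_nonneg_left h (show (0 : EReal) ≤ (c⁻¹ : ℝ) by exact_mod_cast
    (inv_pos.2 hc).le)
  rw [← mul_assoc, ← mul_assoc, ← EReal.coe_mul, inv_mul_cancel₀ hc.ne', EReal.coe_one, one_mul,
    one_mul] at h'
  exact h'.not_gt (EReal.add_lt_add_right_coe hxy b)

lemma exists_lt_eventually_le_toENNReal_sub {X : Type*} {l : Filter X} {f : X → EReal}
    {a : EReal} (hf : Tendsto f l (𝓝 a)) {b : ℝ} {j : ℝ≥0∞} (hj : (j : EReal) < a - b) :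
    ∃ κ : ℝ≥0∞, j < κ ∧ ∀ᶠ x in l, κ ≤ (f x - b).toENNReal := by
  obtain ⟨t, hjt, hta⟩ := EReal.lt_iff_exists_real_btwn.1 hj
  have hsub : ∀ {y : EReal}, (t : EReal) < y - b ↔ (t + b : EReal) < y := fun {_} =>
    EReal.lt_sub_iff_add_lt (.inl (EReal.coe_ne_bot b)) (.inl (EReal.coe_ne_top b))
  refine ⟨ENNReal.ofReal t, ?_, ?_⟩
  · simpa using EReal.toENNReal_lt_toENNReal (EReal.coe_ennreal_nonneg j) hjt
  · filter_upwards [hf.eventually (lt_mem_nhds (hsub.1 hta))] with x hx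
    simpa using EReal.toENNReal_le_toENNReal (hsub.2 hx).le

lemma ENNReal.le_of_mul_self_mul_add_le {s m j k : ℝ≥0∞} (hsm : s + m = 1) (hm : m ≠ 0)
    (hj : j ≠ ⊤) (h : s * s * j + 2 * k * m ≤ j) : k ≤ j := by
  have hs : s ≠ ⊤ := ne_top_of_le_ne_top one_ne_top (hsm ▸ le_self_add)
  have hm' : m ≠ ⊤ := ne_top_of_le_ne_top one_ne_top (hsm ▸ le_add_self)
  -- `1 - s² = m (1 + s) ≤ 2m`
  have hj' : j = s * s * j + m * (2 * s + m) * j := by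
    calc j = (s + m) * (s + m) * j := by rw [hsm, one_mul, one_mul]
      _ = _ := by ring
  have h2 : 2 * s + m ≤ 2 := by
    calc 2 * s + m ≤ 2 * s + 2 * m := by gcongr; exact le_mul_of_one_le_left' one_le_two
      _ = 2 := by rw [← mul_add, hsm, mul_one]
  have hkm : m * (2 * k) ≤ m * (2 * j) := by
    have h' := h.trans_eq hj'
    rw [ENNReal.add_le_add_iff_left (by finiteness)] at h'
    calc m * (2 * k) = 2 * k * m := by ring
      _ ≤ m * (2 * s + m) * j := h'
      _ ≤ m * 2 * j := by gcongr
      _ = m * (2 * j) := by ring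
  rwa [ENNReal.mul_le_mul_iff_right hm hm',
    ENNReal.mul_le_mul_iff_right two_ne_zero ofNat_ne_top] at hkm

lemma eInt_eq_lintegral_sub_add {α : Type*} [MeasurableSpace α] (ν : Measure α)
    [IsProbabilityMeasure ν] {f : α → EReal} (hf : Measurable f) {b : ℝ} (hb : b ≤ 0)
    (hfb : ∀ x, (b : EReal) ≤ f x) :
    eInt ν f = ((∫⁻ x, (f x - b).toENNReal ∂ν : ℝ≥0∞) : EReal) + b := by
  have hN : ∫⁻ x, (-f x).toENNReal ∂ν ≤ ENNReal.ofReal (-b) :=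
    calc ∫⁻ x, (-f x).toENNReal ∂ν ≤ ∫⁻ _, ENNReal.ofReal (-b) ∂ν :=
          lintegral_mono fun x => by
            simpa using EReal.toENNReal_le_toENNReal (EReal.neg_le_neg_iff.2 (hfb x))
      _ = ENNReal.ofReal (-b) := by simp
  have hsum : ∫⁻ x, (f x).toENNReal ∂ν + ENNReal.ofReal (-b) =
      ∫⁻ x, (f x - b).toENNReal ∂ν + ∫⁻ x, (-f x).toENNReal ∂ν := by
    have hNmeas : Measurable fun x => (-f x).toENNReal := hf.neg.ereal_toENNReal
    rw [← lintegral_add_right _ hNmeas,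
      show ENNReal.ofReal (-b) = ∫⁻ _, ENNReal.ofReal (-b) ∂ν by simp,
      ← lintegral_add_right _ measurable_const]
    exact lintegral_congr fun x => EReal.toENNReal_add_ofReal_neg hb (hfb x)
  simp only [eInt, EReal.posPart_eq_toENNReal]
  rw [EReal.coe_ennreal_sub_eq_of_add_eq (ne_top_of_le_ne_top ENNReal.ofReal_ne_top hN)
    ENNReal.ofReal_ne_top hsum, EReal.coe_ennreal_ofReal, max_eq_left (by linarith),
    EReal.coe_neg, sub_eq_add_neg, neg_neg]

section Interaction

variable {E : Type*} [MeasurableSpace E] [Sub E]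

noncomputable def interaction (V : E → ℝ≥0∞) (μ : Measure E) : ℝ≥0∞ :=
  ∫⁻ p, V (p.1 - p.2) ∂(μ.prod μ)

lemma interaction_restrict (V : E → ℝ≥0∞) (μ : Measure E) [SFinite μ] (S : Set E) :
    interaction V (μ.restrict S) = ∫⁻ p in S ×ˢ S, V (p.1 - p.2) ∂(μ.prod μ) := by
  rw [interaction, Measure.prod_restrict]

lemma interaction_smul (V : E → ℝ≥0∞) (μ : Measure E) [SFinite μ] (c : ℝ≥0∞) :
    interaction V (c • μ) = c * c * interaction V μ := by
  rw [interaction, Measure.prod_smul_left, Measure.prod_smul_right, smul_smul,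
    lintegral_smul_measure, interaction, smul_eq_mul]

lemma interaction_cond (V : E → ℝ≥0∞) (μ : Measure E) [SFinite μ] (S : Set E) :
    interaction V μ[|S] = (μ S)⁻¹ * (μ S)⁻¹ * ∫⁻ p in S ×ˢ S, V (p.1 - p.2) ∂(μ.prod μ) := by
  rw [ProbabilityTheory.cond, interaction_smul, interaction_restrict]

lemma measure_mul_measure_mul_interaction_le {V : E → ℝ≥0∞} {ρ : Measure E}
    [IsFiniteMeasure ρ]
    (hmin : ∀ μ : Measure E, IsProbabilityMeasure μ → interaction V ρ ≤ interaction V μ)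
    (S : Set E) :
    ρ S * ρ S * interaction V ρ ≤ ∫⁻ p in S ×ˢ S, V (p.1 - p.2) ∂(ρ.prod ρ) := by
  rcases eq_or_ne (ρ S) 0 with hS | hS
  · simp [hS]
  have hρS : ρ S * (ρ S)⁻¹ = 1 := ENNReal.mul_inv_cancel hS (measure_ne_top ρ S)
  calc ρ S * ρ S * interaction V ρ
      ≤ ρ S * ρ S * ((ρ S)⁻¹ * (ρ S)⁻¹ * ∫⁻ p in S ×ˢ S, V (p.1 - p.2) ∂(ρ.prod ρ)) := by
        rw [← interaction_cond]
        gcongr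
        exact hmin _ (cond_isProbabilityMeasure hS)
    _ = ∫⁻ p in S ×ˢ S, V (p.1 - p.2) ∂(ρ.prod ρ) := by
        rw [← mul_assoc, mul_mul_mul_comm, hρS, one_mul, one_mul]

lemma setLIntegral_prod_add_le_interaction {V : E → ℝ≥0∞} (μ : Measure E) [SFinite μ]
    {S B : Set E} (hS : MeasurableSet S) (hB : MeasurableSet B) (hBS : B ⊆ S) {κ : ℝ≥0∞}
    (hfar : ∀ x ∈ B, ∀ y ∉ S, κ ≤ V (x - y) ∧ κ ≤ V (y - x)) :
    ∫⁻ p in S ×ˢ S, V (p.1 - p.2) ∂(μ.prod μ) + 2 * κ * μ B * μ Sᶜ ≤ interaction V μ := by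
  have hlower : ∀ {A C : Set E}, MeasurableSet A → MeasurableSet C →
      (∀ p ∈ A ×ˢ C, κ ≤ V (p.1 - p.2)) →
      κ * (μ A * μ C) ≤ ∫⁻ p in A ×ˢ C, V (p.1 - p.2) ∂(μ.prod μ) := by
    intro A C hA hC h
    calc κ * (μ A * μ C) = ∫⁻ _ in A ×ˢ C, κ ∂(μ.prod μ) := by
          rw [setLIntegral_const, Measure.prod_prod]
      _ ≤ _ := setLIntegral_mono' (hA.prod hC) h
  have hdisj₁ : Disjoint (S ×ˢ S) (B ×ˢ Sᶜ) :=
    Set.disjoint_prod.2 (Or.inr disjoint_compl_right)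
  have hdisj₂ : Disjoint (S ×ˢ S ∪ B ×ˢ Sᶜ) (Sᶜ ×ˢ B) :=
    Set.disjoint_union_left.2 ⟨Set.disjoint_prod.2 (Or.inl disjoint_compl_right),
      Set.disjoint_prod.2 (Or.inl (disjoint_compl_right.mono_left hBS))⟩
  calc ∫⁻ p in S ×ˢ S, V (p.1 - p.2) ∂(μ.prod μ) + 2 * κ * μ B * μ Sᶜ
      = ∫⁻ p in S ×ˢ S, V (p.1 - p.2) ∂(μ.prod μ) + κ * (μ B * μ Sᶜ) + κ * (μ Sᶜ * μ B) := by
        ring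
    _ ≤ ∫⁻ p in S ×ˢ S, V (p.1 - p.2) ∂(μ.prod μ) + ∫⁻ p in B ×ˢ Sᶜ, V (p.1 - p.2) ∂(μ.prod μ)
        + ∫⁻ p in Sᶜ ×ˢ B, V (p.1 - p.2) ∂(μ.prod μ) := by
        gcongr
        · exact hlower hB hS.compl fun p hp => (hfar p.1 hp.1 p.2 hp.2).1
        · exact hlower hS.compl hB fun p hp => (hfar p.2 hp.2 p.1 hp.1).2
    _ = ∫⁻ p in S ×ˢ S ∪ B ×ˢ Sᶜ ∪ Sᶜ ×ˢ B, V (p.1 - p.2) ∂(μ.prod μ) := by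
        rw [lintegral_union (hS.compl.prod hB) hdisj₂, lintegral_union (hB.prod hS.compl) hdisj₁]
    _ ≤ interaction V μ := setLIntegral_le_lintegral _ _

end Interaction

theorem exists_measure_compl_closedBall_eq_zero_of_forall_interaction_le {E : Type*}
    [NormedAddCommGroup E] [MeasurableSpace E] [OpensMeasurableSpace E] {V : E → ℝ≥0∞}
    {ρ : Measure E} [IsProbabilityMeasure ρ]
    (hmin : ∀ μ : Measure E, IsProbabilityMeasure μ → interaction V ρ ≤ interaction V μ)
    {κ : ℝ≥0∞} (hκ : interaction V ρ < κ) (hfar : ∀ᶠ z in cobounded E, κ ≤ V z) :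
    ∃ R, ρ (closedBall 0 R)ᶜ = 0 := by
  obtain ⟨L, -, hL⟩ := hasBasis_cobounded_norm.eventually_iff.1 hfar
  have hmass : Tendsto (fun n : ℕ => κ * ρ (closedBall 0 n)) atTop (𝓝 (κ * 1)) := by
    refine ENNReal.Tendsto.const_mul ?_ (Or.inl one_ne_zero)
    rw [← measure_univ (μ := ρ), ← iUnion_closedBall_nat 0]
    exact tendsto_measure_iUnion_atTop fun m n hmn => closedBall_subset_closedBall (by simpa)
  obtain ⟨n, hn⟩ := (hmass.eventually (lt_mem_nhds (by rwa [mul_one]))).exists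
  set S := closedBall (0 : E) (n + max L 0)
  refine ⟨n + max L 0, ?_⟩
  by_contra hm
  have hsm : ρ S + ρ Sᶜ = 1 := by
    rw [measure_add_measure_compl measurableSet_closedBall, measure_univ]
  have hfar' : ∀ x ∈ closedBall (0 : E) n, ∀ y ∉ S, κ ≤ V (x - y) ∧ κ ≤ V (y - x) := by
    intro x hx y hy
    rw [mem_closedBall_zero_iff] at hx
    rw [mem_closedBall_zero_iff, not_le] at hy
    have : L ≤ ‖y‖ - ‖x‖ := by linarith [le_max_left L 0]
    exact ⟨hL (this.trans ((norm_sub_norm_le y x).trans_eq (norm_sub_rev y x))),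
      hL (this.trans (norm_sub_norm_le y x))⟩
  refine hn.not_ge (ENNReal.le_of_mul_self_mul_add_le hsm hm hκ.ne_top ?_)
  calc ρ S * ρ S * interaction V ρ + 2 * (κ * ρ (closedBall 0 n)) * ρ Sᶜ
      ≤ ∫⁻ p in S ×ˢ S, V (p.1 - p.2) ∂(ρ.prod ρ) + 2 * κ * ρ (closedBall 0 n) * ρ Sᶜ := by
        rw [← mul_assoc]
        gcongr
        exact measure_mul_measure_mul_interaction_le hmin S
    _ ≤ interaction V ρ := setLIntegral_prod_add_le_interaction ρ measurableSet_closedBall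
        measurableSet_closedBall (closedBall_subset_closedBall (by simp)) hfar'

lemma energy_eq_interaction {d : ℕ} {W : Ed d → EReal} (hW : Measurable W) {b : ℝ} (hb : b ≤ 0)
    (hWb : ∀ x, (b : EReal) ≤ W x) (μ : Measure (Ed d)) [IsProbabilityMeasure μ] :
    energy W μ = ((1 / 2 : ℝ) : EReal) * (interaction (fun z => (W z - b).toENNReal) μ + b) := by
  rw [energy, eInt_eq_lintegral_sub_add (f := fun p : Ed d × Ed d => W (p.1 - p.2)) _
    (hW.comp (measurable_fst.sub measurable_snd)) hb fun _ => hWb _, interaction]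

lemma msupport_eq_support {α : Type*} [TopologicalSpace α] [MeasurableSpace α]
    (μ : Measure α) : msupport μ = μ.support := by
  rw [Measure.support_eq_forall_isOpen]
  ext x
  exact forall_congr' fun U => forall_comm

theorem global_minimiser_compactly_supported_general
    {d : ℕ} (W : Ed d → EReal) (hWmeas : Measurable W)
    -- (H1)
    (Wmin : ℝ) (hWmin : Wmin < 0) (hbound : ∀ x, (Wmin : EReal) ≤ W x)
    -- (H4)
    (Winf : EReal) (hlim : Tendsto W (cocompact (Ed d)) (nhds Winf))
    (hunst : ∃ ρ : Measure (Ed d), IsProbabilityMeasure ρ ∧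
      energy W ρ < ((1 / 2 : ℝ) : EReal) * Winf)
    (ρ : Measure (Ed d)) (hρ : IsMinimiser W ρ) :
    IsCompact (msupport ρ) := by
  obtain ⟨hρprob, hρmin⟩ := hρ
  obtain ⟨μ₀, hμ₀, hμ₀E⟩ := hunst
  set V : Ed d → ℝ≥0∞ := fun z => (W z - Wmin).toENNReal
  have hE : ∀ μ, IsProbabilityMeasure μ →
      energy W μ = ((1 / 2 : ℝ) : EReal) * (interaction V μ + Wmin) :=
    fun μ _ => energy_eq_interaction hWmeas hWmin.le hbound μ
  have hφ := EReal.strictMono_coe_mul_add_coe (c := 1 / 2) (by norm_num) Wmin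
  have hmin : ∀ μ, IsProbabilityMeasure μ → interaction V ρ ≤ interaction V μ := fun μ hμ =>
    EReal.coe_ennreal_le_coe_ennreal_iff.1 <| hφ.le_iff_le.1 <| hE ρ hρprob ▸ hE μ hμ ▸ hρmin μ hμ
  have hJ : (interaction V ρ : EReal) < Winf - Wmin := hφ.lt_iff_lt.1 <| by
    simpa only [EReal.sub_add_cancel, ← hE ρ hρprob] using (hρmin μ₀ hμ₀).trans_lt hμ₀E
  obtain ⟨κ, hκ, hfar⟩ := exists_lt_eventually_le_toENNReal_sub hlim hJ
  obtain ⟨R, hR⟩ := exists_measure_compl_closedBall_eq_zero_of_forall_interaction_le hmin hκ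
    (cobounded_eq_cocompact (α := Ed d) ▸ hfar)
  rw [msupport_eq_support]
  exact (isCompact_closedBall 0 R).of_isClosed_subset Measure.isClosed_support
    (Measure.support_subset_of_isClosed isClosed_closedBall (mem_ae_iff.2 hR))

/-- **Corollary.** Under Hypotheses (H1)–(H5), any global minimiser of the interaction
energy on `P(ℝ^d)` is compactly supported. -/
theorem global_minimiser_compactly_supported
    {d : ℕ} (hd : 1 ≤ d) (W : Ed d → EReal) (hWmeas : Measurable W)
    -- (H1)
    (Wmin : ℝ) (hWmin : Wmin < 0) (hbound : ∀ x, (Wmin : EReal) ≤ W x)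
    -- (H2)
    (hloc : ∀ (x : Ed d) (r : ℝ), 0 < r →
      ∫⁻ y in Metric.ball x r, (W y).abs ∂volume < ⊤)
    -- (H3)
    (hsym : ∀ x, W (-x) = W x)
    -- (H4)
    (Winf : EReal) (hlim : Tendsto W (cocompact (Ed d)) (nhds Winf))
    (hunst : ∃ ρ : Measure (Ed d), IsProbabilityMeasure ρ ∧
      energy W ρ < ((1 / 2 : ℝ) : EReal) * Winf)
    -- (H5)
    (hlsc : LowerSemicontinuous W)
    (ρ : Measure (Ed d)) (hρ : IsMinimiser W ρ) :
    IsCompact (msupport ρ) :=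
  global_minimiser_compactly_supported_general W hWmeas Wmin hWmin hbound Winf hlim hunst ρ hρ
end

section
/- Let d ≥ 1 and let W : ℝ^d → ℝ ∪ {+∞} be measurable, bounded below by a finite constant W_min < 0, locally integrable, symmetric (W(x) = W(−x)), and lower semicontinuous. Let ρ be a global minimiser of the interaction energy E on P(ℝ^d). Then W ∗ ρ(x) = 2E(ρ) for ρ-almost every x ∈ ℝ^d, where W ∗ ρ(x) = ∫_{ℝ^d} W(x−y) dρ(y). -/
open MeasureTheory Filter Metric
open scoped ENNReal

open Topology Set ProbabilityTheory

/-!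
With `k = -Wmin`, the kernel `G = W + k` is nonnegative, and on probability measures the
energy is `E(μ) = (J(μ, μ) - k) / 2` with `J(μ, ν) = ∬ G (x - y) dμ(x) dν(y)`. So `ρ` minimises
`J(μ, μ)`, and `J(ρ, ρ) < ∞` by comparison with the normalised Lebesgue measure on a ball.
If `ρ(A) > 0` and `μ = ρ(· | A)`, then `J` along `(1 - t) ρ + t μ` is a quadratic in `t`
minimal at `t = 0`, which forces `J(ρ, ρ) ≤ J(ρ, μ)`, i.e. `ρ(A) J(ρ, ρ) ≤ ∫_A G ∗ ρ dρ`.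
Hence `G ∗ ρ ≥ J(ρ, ρ)` `ρ`-a.e., and as `∫ G ∗ ρ dρ = J(ρ, ρ)` this is an equality a.e.;
subtracting `k` gives `W ∗ ρ = 2 E(ρ)`.
-/

lemma EReal.measurable_abs : Measurable EReal.abs :=
  EReal.measurable_of_measurable_real <| by
    simpa [EReal.abs_def] using
      (measurable_id.norm.ennreal_ofReal : Measurable fun r : ℝ => ENNReal.ofReal ‖r‖)

lemma Measurable.ereal_abs {α : Type*} [MeasurableSpace α] {f : α → EReal} (hf : Measurable f) :
    Measurable fun x => (f x).abs :=
  EReal.measurable_abs.comp hf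

lemma EReal.posPart_coe (r : ℝ) : (r : EReal).posPart = ENNReal.ofReal (max r 0) := by
  rw [EReal.posPart, ← EReal.coe_zero, ← EReal.coe_strictMono.monotone.map_max, EReal.abs_def,
    abs_of_nonneg (le_max_right _ _)]

lemma EReal.abs_add_coe_le (x : EReal) {k : ℝ} (hk : 0 ≤ k) :
    (x + k).abs ≤ x.abs + ENNReal.ofReal k := by
  induction x with
  | bot => simp
  | coe r =>
    rw [← EReal.coe_add, EReal.abs_def, EReal.abs_def, ← ENNReal.ofReal_add (abs_nonneg _) hk]
    exact ENNReal.ofReal_le_ofReal ((abs_add_le _ _).trans (by rw [abs_of_nonneg hk]))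
  | top => simp

lemma EReal.posPart_neg_le_of_neg_le {k : ℝ} (hk : 0 ≤ k) {x : EReal} (hx : -(k : EReal) ≤ x) :
    (-x).posPart ≤ ENNReal.ofReal k := by
  induction x with
  | bot => simp [← EReal.coe_neg] at hx
  | coe r =>
    rw [← EReal.coe_neg, EReal.coe_le_coe_iff] at hx
    rw [← EReal.coe_neg, EReal.posPart_coe]
    exact ENNReal.ofReal_le_ofReal (max_le (by linarith) hk)
  | top => simp [EReal.posPart]

/-- `x + k = x⁺ - x⁻ + k`, rearranged so that it makes sense in `ℝ≥0∞`. -/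
lemma EReal.abs_add_coe_add_posPart_neg {k : ℝ} (hk : 0 ≤ k) {x : EReal} (hx : -(k : EReal) ≤ x) :
    (x + k).abs + (-x).posPart = x.posPart + ENNReal.ofReal k := by
  induction x with
  | bot => simp [← EReal.coe_neg] at hx
  | coe r =>
    rw [← EReal.coe_neg, EReal.coe_le_coe_iff] at hx
    rw [← EReal.coe_add, ← EReal.coe_neg, EReal.posPart_coe, EReal.posPart_coe, EReal.abs_def,
      abs_of_nonneg (by linarith), ← ENNReal.ofReal_add (by linarith) (le_max_right _ _),
      ← ENNReal.ofReal_add (le_max_right _ _) hk]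
    congr 1
    rcases le_total r 0 with h | h <;> simp [h]
  | top => simp [EReal.posPart]

lemma EReal.coe_ennreal_sub_eq_of_add_eq_s5 {a b c d : ℝ≥0∞} (hb : b ≠ ⊤) (hd : d ≠ ⊤)
    (h : a + b = c + d) : (c : EReal) - b = a - d := by
  lift b to NNReal using hb
  lift d to NNReal using hd
  by_cases ha : a = ⊤
  · obtain rfl : c = ⊤ := by simpa [ha, eq_comm] using h
    simp [ha]
  · lift a to NNReal using ha
    lift c to NNReal using (by simpa [eq_comm] using congrArg (· ≠ ⊤) h : c ≠ ⊤)
    have hr : (a : ℝ) + b = c + d := by exact_mod_cast h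
    simp only [EReal.coe_nnreal_eq_coe_real, ← EReal.coe_sub, EReal.coe_eq_coe_iff]
    linarith

lemma EReal.coe_two_mul_coe_half_mul (x : EReal) :
    ((2 : ℝ) : EReal) * (((1 / 2 : ℝ) : EReal) * x) = x := by
  rw [← mul_assoc, ← EReal.coe_mul]
  norm_num

lemma eInt_eq_lintegral_abs_add_sub {α : Type*} [MeasurableSpace α] (μ : Measure α)
    [IsProbabilityMeasure μ] {f : α → EReal} (hf : Measurable f) {k : ℝ} (hk : 0 ≤ k)
    (hfk : ∀ x, -(k : EReal) ≤ f x) :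
    eInt μ f = ((∫⁻ x, (f x + k).abs ∂μ : ℝ≥0∞) : EReal) - k := by
  have hneg : ∫⁻ x, (-f x).posPart ∂μ ≤ ENNReal.ofReal k :=
    (lintegral_mono fun x => EReal.posPart_neg_le_of_neg_le hk (hfk x)).trans (by simp)
  have hsum : ∫⁻ x, (f x + k).abs ∂μ + ∫⁻ x, (-f x).posPart ∂μ
      = ∫⁻ x, (f x).posPart ∂μ + ENNReal.ofReal k := by
    rw [← lintegral_add_left (hf.add_const _).ereal_abs,
      lintegral_congr fun x => EReal.abs_add_coe_add_posPart_neg hk (hfk x),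
      lintegral_add_right _ measurable_const, lintegral_const, measure_univ, mul_one]
  rw [eInt, EReal.coe_ennreal_sub_eq_of_add_eq_s5 (ne_top_of_le_ne_top ENNReal.ofReal_ne_top hneg)
    ENNReal.ofReal_ne_top hsum, EReal.coe_ennreal_ofReal, max_eq_left hk]

lemma lintegral_abs_add_coe_ne_top {α : Type*} [MeasurableSpace α] {μ : Measure α}
    [IsFiniteMeasure μ] {f : α → EReal} {k : ℝ} (hk : 0 ≤ k)
    (hfin : ∫⁻ x, (f x).abs ∂μ ≠ ⊤) : ∫⁻ x, (f x + k).abs ∂μ ≠ ⊤ := by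
  refine ne_top_of_le_ne_top (b := ∫⁻ x, (f x).abs ∂μ + ENNReal.ofReal k * μ univ)
    (by finiteness) ?_
  calc ∫⁻ x, (f x + k).abs ∂μ ≤ ∫⁻ x, ((f x).abs + ENNReal.ofReal k) ∂μ :=
        lintegral_mono fun x => (f x).abs_add_coe_le hk
    _ = ∫⁻ x, (f x).abs ∂μ + ENNReal.ofReal k * μ univ := by
        rw [lintegral_add_right _ measurable_const, lintegral_const]

section Kernel

variable {E : Type*} [MeasurableSpace E] [AddGroup E] {G : E → ℝ≥0∞}

noncomputable def kernelPotential (G : E → ℝ≥0∞) (ν : Measure E) (x : E) : ℝ≥0∞ :=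
  ∫⁻ y, G (x - y) ∂ν

noncomputable def kernelPairing (G : E → ℝ≥0∞) (μ ν : Measure E) : ℝ≥0∞ :=
  ∫⁻ x, kernelPotential G ν x ∂μ

lemma kernelPairing_add_left (G : E → ℝ≥0∞) (μ μ' ν : Measure E) :
    kernelPairing G (μ + μ') ν = kernelPairing G μ ν + kernelPairing G μ' ν :=
  lintegral_add_measure _ _ _

lemma kernelPairing_smul_left (G : E → ℝ≥0∞) (c : ℝ≥0∞) (μ ν : Measure E) :
    kernelPairing G (c • μ) ν = c * kernelPairing G μ ν :=
  lintegral_smul_measure _ _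

lemma kernelPairing_mono {μ μ' ν ν' : Measure E} (hμ : μ ≤ μ') (hν : ν ≤ ν') :
    kernelPairing G μ ν ≤ kernelPairing G μ' ν' :=
  lintegral_mono' hμ fun _ => lintegral_mono' hν le_rfl

variable [MeasurableSub₂ E]

lemma Measurable.comp_fst_sub_snd {β : Type*} [MeasurableSpace β] {f : E → β}
    (hf : Measurable f) : Measurable fun p : E × E => f (p.1 - p.2) :=
  hf.comp (measurable_fst.sub measurable_snd)

lemma measurable_kernelPotential (hG : Measurable G) (ν : Measure E) [SFinite ν] :
    Measurable (kernelPotential G ν) :=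
  hG.comp_fst_sub_snd.lintegral_prod_right'

lemma lintegral_prod_eq_kernelPairing (hG : Measurable G) (μ ν : Measure E) [SFinite ν] :
    ∫⁻ p, G (p.1 - p.2) ∂(μ.prod ν) = kernelPairing G μ ν :=
  lintegral_prod _ hG.comp_fst_sub_snd.aemeasurable

lemma kernelPairing_comm (hG : Measurable G) (hGsym : ∀ z, G (-z) = G z)
    (μ ν : Measure E) [SFinite μ] [SFinite ν] : kernelPairing G μ ν = kernelPairing G ν μ := by
  unfold kernelPairing kernelPotential
  rw [lintegral_lintegral_swap (f := fun x y => G (x - y)) hG.comp_fst_sub_snd.aemeasurable]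
  exact lintegral_congr fun x => lintegral_congr fun y => by rw [← neg_sub, hGsym]

lemma kernelPairing_add_right (hG : Measurable G) (μ ν ν' : Measure E) [SFinite ν] :
    kernelPairing G μ (ν + ν') = kernelPairing G μ ν + kernelPairing G μ ν' := by
  simp_rw [kernelPairing, kernelPotential, lintegral_add_measure]
  exact lintegral_add_left (measurable_kernelPotential hG ν) _

lemma kernelPairing_smul_right (hG : Measurable G) (c : ℝ≥0∞) (μ ν : Measure E) [SFinite ν] :
    kernelPairing G μ (c • ν) = c * kernelPairing G μ ν := by
  simp_rw [kernelPairing, kernelPotential, lintegral_smul_measure, smul_eq_mul]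
  exact lintegral_const_mul c (measurable_kernelPotential hG ν)

end Kernel

lemma le_of_forall_le_quadratic {i c m : ℝ}
    (h : ∀ t : ℝ, 0 < t → t < 1 → i ≤ (1 - t) ^ 2 * i + 2 * t * (1 - t) * c + t ^ 2 * m) :
    i ≤ c := by
  have hlim : Tendsto (fun t => 2 * (c - i) + t * (i - 2 * c + m)) (𝓝[>] 0) (𝓝 (2 * (c - i))) :=
    tendsto_nhdsWithin_of_tendsto_nhds <| by
      simpa using ((continuous_id.mul continuous_const).const_add (2 * (c - i))).tendsto 0
  have hpos : ∀ᶠ t in 𝓝[>] 0, 0 ≤ 2 * (c - i) + t * (i - 2 * c + m) := by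
    filter_upwards [Ioo_mem_nhdsGT one_pos] with t ⟨ht0, ht1⟩
    refine (mul_nonneg_iff_of_pos_left ht0).mp ?_
    linarith [h t ht0 ht1]
  linarith [ge_of_tendsto hlim hpos]

lemma isProbabilityMeasure_ofReal_smul_add {α : Type*} [MeasurableSpace α] {ρ μ : Measure α}
    [IsProbabilityMeasure ρ] [IsProbabilityMeasure μ] {t : ℝ} (ht0 : 0 ≤ t) (ht1 : t ≤ 1) :
    IsProbabilityMeasure (ENNReal.ofReal (1 - t) • ρ + ENNReal.ofReal t • μ) :=
  ⟨by simp [← ENNReal.ofReal_add (sub_nonneg.2 ht1) ht0]⟩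

section Variational

variable {E : Type*} [MeasurableSpace E] [AddGroup E] [MeasurableSub₂ E] {G : E → ℝ≥0∞}

lemma kernelPairing_self_le_of_le_mix (hG : Measurable G) (hGsym : ∀ z, G (-z) = G z)
    {ρ μ : Measure E} [SFinite ρ] [SFinite μ] (hρρ : kernelPairing G ρ ρ ≠ ⊤)
    (hρμ : kernelPairing G ρ μ ≠ ⊤) (hμμ : kernelPairing G μ μ ≠ ⊤)
    (hmix : ∀ t : ℝ, 0 < t → t < 1 → kernelPairing G ρ ρ ≤
      kernelPairing G (ENNReal.ofReal (1 - t) • ρ + ENNReal.ofReal t • μ)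
        (ENNReal.ofReal (1 - t) • ρ + ENNReal.ofReal t • μ)) :
    kernelPairing G ρ ρ ≤ kernelPairing G ρ μ := by
  rw [← ENNReal.toReal_le_toReal hρρ hρμ]
  refine le_of_forall_le_quadratic (m := (kernelPairing G μ μ).toReal) fun t ht0 ht1 => ?_
  have h := hmix t ht0 ht1
  simp only [kernelPairing_add_left, kernelPairing_smul_left, kernelPairing_add_right hG,
    kernelPairing_smul_right hG, kernelPairing_comm hG hGsym μ ρ] at h
  have := ENNReal.toReal_mono (by finiteness) h
  simp (disch := finiteness) only [ENNReal.toReal_add, ENNReal.toReal_mul,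
    ENNReal.toReal_ofReal ht0.le, ENNReal.toReal_ofReal (sub_nonneg.2 ht1.le)] at this
  linarith

lemma measure_mul_kernelPairing_self_le_setLIntegral (hG : Measurable G) (hGsym : ∀ z, G (-z) = G z)
    {ρ : Measure E} [IsProbabilityMeasure ρ] (hfin : kernelPairing G ρ ρ ≠ ⊤)
    (hmin : ∀ μ, IsProbabilityMeasure μ → kernelPairing G ρ ρ ≤ kernelPairing G μ μ)
    (A : Set E) :
    ρ A * kernelPairing G ρ ρ ≤ ∫⁻ x in A, kernelPotential G ρ x ∂ρ := by
  rcases eq_or_ne (ρ A) 0 with hA | hA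
  · simp [hA]
  have hAfin : ρ A ≠ ⊤ := measure_ne_top ρ A
  set μ := (ρ A)⁻¹ • ρ.restrict A
  have : IsProbabilityMeasure μ := cond_isProbabilityMeasure hA
  have hsetInt : ∫⁻ x in A, kernelPotential G ρ x ∂ρ = ρ A * kernelPairing G ρ μ := by
    rw [kernelPairing_comm hG hGsym ρ μ, kernelPairing_smul_left,
      ← mul_assoc, ENNReal.mul_inv_cancel hA hAfin, one_mul]
    rfl
  have hρμ : kernelPairing G ρ μ ≤ (ρ A)⁻¹ * kernelPairing G ρ ρ := by
    rw [kernelPairing_smul_right hG]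
    gcongr
    exact kernelPairing_mono le_rfl Measure.restrict_le_self
  have hμμ : kernelPairing G μ μ ≤ (ρ A)⁻¹ * kernelPairing G ρ μ := by
    calc kernelPairing G μ μ = (ρ A)⁻¹ * kernelPairing G (ρ.restrict A) μ :=
          kernelPairing_smul_left _ _ _ _
      _ ≤ (ρ A)⁻¹ * kernelPairing G ρ μ := by
          gcongr
          exact kernelPairing_mono Measure.restrict_le_self le_rfl
  have hρμ_fin : kernelPairing G ρ μ ≠ ⊤ :=
    ne_top_of_le_ne_top (by simp [ENNReal.mul_ne_top, hA, hfin]) hρμ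
  rw [hsetInt]
  gcongr
  exact kernelPairing_self_le_of_le_mix hG hGsym hfin hρμ_fin
    (ne_top_of_le_ne_top (by finiteness) hμμ) fun t ht0 ht1 =>
      hmin _ (isProbabilityMeasure_ofReal_smul_add ht0.le ht1.le)

theorem kernelPotential_ae_eq_kernelPairing_self (hG : Measurable G) (hGsym : ∀ z, G (-z) = G z)
    {ρ : Measure E} [IsProbabilityMeasure ρ] (hfin : kernelPairing G ρ ρ ≠ ⊤)
    (hmin : ∀ μ, IsProbabilityMeasure μ → kernelPairing G ρ ρ ≤ kernelPairing G μ μ) :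
    kernelPotential G ρ =ᵐ[ρ] fun _ => kernelPairing G ρ ρ := by
  have hle : (fun _ => kernelPairing G ρ ρ) ≤ᵐ[ρ] kernelPotential G ρ :=
    ae_le_of_forall_setLIntegral_le_of_sigmaFinite measurable_const fun A _ _ => by
      rw [setLIntegral_const, mul_comm]
      exact measure_mul_kernelPairing_self_le_setLIntegral hG hGsym hfin hmin A
  exact (ae_eq_of_ae_le_of_lintegral_le hle (by simpa using hfin)
    (measurable_kernelPotential hG ρ).aemeasurable (by simp [kernelPairing])).symm

end Variational

lemma exists_isProbabilityMeasure_kernelPairing_ne_top {E : Type*} [NormedAddCommGroup E]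
    [MeasurableSpace E] [BorelSpace E] [ProperSpace E] (ν : Measure E) [ν.IsAddHaarMeasure]
    [ν.IsNegInvariant] {G : E → ℝ≥0∞} (hG : Measurable G)
    (hloc : ∫⁻ z in ball 0 2, G z ∂ν ≠ ⊤) :
    ∃ μ : Measure E, IsProbabilityMeasure μ ∧ kernelPairing G μ μ ≠ ⊤ := by
  set B : Set E := ball 0 1
  have hB0 : ν B ≠ 0 := (measure_ball_pos ν 0 one_pos).ne'
  have hBtop : ν B ≠ ⊤ := measure_ball_lt_top.ne
  have hpot : ∀ x ∈ B, kernelPotential G (ν.restrict B) x ≤ ∫⁻ z in ball 0 2, G z ∂ν := by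
    intro x hx
    have hsub : ∀ y ∈ B, x - y ∈ ball (0 : E) 2 := fun y hy => by
      rw [mem_ball_zero_iff] at hx hy ⊢
      linarith [norm_sub_le x y]
    calc ∫⁻ y in B, G (x - y) ∂ν = ∫⁻ y in B, (ball 0 2).indicator G (x - y) ∂ν :=
          setLIntegral_congr_fun measurableSet_ball fun y hy =>
            (indicator_of_mem (hsub y hy) G).symm
      _ ≤ ∫⁻ y, (ball 0 2).indicator G (x - y) ∂ν := setLIntegral_le_lintegral _ _
      _ = ∫⁻ z, (ball 0 2).indicator G z ∂ν := lintegral_sub_left_eq_self _ x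
      _ = ∫⁻ z in ball 0 2, G z ∂ν := lintegral_indicator measurableSet_ball _
  have hrestrict : kernelPairing G (ν.restrict B) (ν.restrict B) ≠ ⊤ := by
    refine ne_top_of_le_ne_top (ENNReal.mul_ne_top hloc hBtop) ?_
    calc kernelPairing G (ν.restrict B) (ν.restrict B)
        ≤ ∫⁻ _ in B, ∫⁻ z in ball 0 2, G z ∂ν ∂ν := setLIntegral_mono measurable_const hpot
      _ = (∫⁻ z in ball 0 2, G z ∂ν) * ν B := setLIntegral_const _ _
  refine ⟨ν[|B], cond_isProbabilityMeasure_of_finite hB0 hBtop, ?_⟩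
  rw [ProbabilityTheory.cond, kernelPairing_smul_left, kernelPairing_smul_right hG]
  finiteness

section Energy

variable {d : ℕ} {W : Ed d → EReal} {k : ℝ}

lemma energy_eq_kernelPairing (hW : Measurable W) (hk : 0 ≤ k) (hWk : ∀ x, -(k : EReal) ≤ W x)
    (μ : Measure (Ed d)) [IsProbabilityMeasure μ] :
    energy W μ = ((1 / 2 : ℝ) : EReal) *
      ((kernelPairing (fun z => (W z + k).abs) μ μ : EReal) - k) := by
  rw [energy, eInt_eq_lintegral_abs_add_sub _ hW.comp_fst_sub_snd hk fun p => hWk _,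
    lintegral_prod_eq_kernelPairing (hW.add_const _).ereal_abs]

lemma kernelPairing_le_of_energy_le (hW : Measurable W) (hk : 0 ≤ k)
    (hWk : ∀ x, -(k : EReal) ≤ W x) {ρ μ : Measure (Ed d)} [IsProbabilityMeasure ρ]
    [IsProbabilityMeasure μ] (h : energy W ρ ≤ energy W μ) :
    kernelPairing (fun z => (W z + k).abs) ρ ρ ≤ kernelPairing (fun z => (W z + k).abs) μ μ := by
  rw [energy_eq_kernelPairing hW hk hWk, energy_eq_kernelPairing hW hk hWk] at h
  have h2 := add_le_add_left (mul_le_mul_of_nonneg_left h (by norm_num : (0 : EReal) ≤ (2 : ℝ)))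
    (k : EReal)
  simpa only [EReal.coe_two_mul_coe_half_mul, EReal.sub_add_cancel,
    EReal.coe_ennreal_le_coe_ennreal_iff] using h2

end Energy

theorem eulerLagrange_global_general
    {d : ℕ} (W : Ed d → EReal) (hWmeas : Measurable W)
    (Wmin : ℝ) (hWmin : Wmin < 0) (hbound : ∀ x, (Wmin : EReal) ≤ W x)
    (hloc : ∀ (x : Ed d) (r : ℝ), 0 < r →
      ∫⁻ y in Metric.ball x r, (W y).abs ∂volume < ⊤)
    (hsym : ∀ x, W (-x) = W x)
    (ρ : Measure (Ed d)) (hρ : IsMinimiser W ρ) :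
    ∀ᵐ x ∂ρ, eInt ρ (fun y => W (x - y)) = ((2 : ℝ) : EReal) * energy W ρ := by
  obtain ⟨hρprob, hmin⟩ := hρ
  set k := -Wmin
  have hk : 0 ≤ k := by linarith
  have hWk : ∀ x, -(k : EReal) ≤ W x := by simpa [k] using hbound
  set G : Ed d → ℝ≥0∞ := fun z => (W z + k).abs
  have hG : Measurable G := (hWmeas.add_const _).ereal_abs
  have hGsym : ∀ z, G (-z) = G z := fun z => by simp only [G, hsym]
  have hGmin : ∀ μ, IsProbabilityMeasure μ → kernelPairing G ρ ρ ≤ kernelPairing G μ μ :=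
    fun μ hμ => kernelPairing_le_of_energy_le hWmeas hk hWk (hmin μ hμ)
  have : IsFiniteMeasure (volume.restrict (ball (0 : Ed d) 2)) :=
    isFiniteMeasure_restrict.2 measure_ball_lt_top.ne
  obtain ⟨μ₀, hμ₀, hfin₀⟩ := exists_isProbabilityMeasure_kernelPairing_ne_top volume hG
    (lintegral_abs_add_coe_ne_top hk (hloc 0 2 two_pos).ne)
  have hfin : kernelPairing G ρ ρ ≠ ⊤ := ne_top_of_le_ne_top hfin₀ (hGmin μ₀ hμ₀)
  filter_upwards [kernelPotential_ae_eq_kernelPairing_self hG hGsym hfin hGmin] with x hx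
  rw [eInt_eq_lintegral_abs_add_sub ρ (f := fun y => W (x - y))
      (hWmeas.comp (measurable_const_sub x)) hk fun y => hWk _,
    energy_eq_kernelPairing hWmeas hk hWk, EReal.coe_two_mul_coe_half_mul]
  exact congrArg (fun a : ℝ≥0∞ => (a : EReal) - k) hx

/-- **Euler–Lagrange condition for global minimisers.** If `W` satisfies (H1), (H2), (H3),
(H5) and `ρ` is a global minimiser of the interaction energy on `P(ℝ^d)`, then
`W ∗ ρ = 2 E(ρ)` holds `ρ`-almost everywhere. -/
theorem eulerLagrange_global
    {d : ℕ} (hd : 1 ≤ d) (W : Ed d → EReal) (hWmeas : Measurable W)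
    (Wmin : ℝ) (hWmin : Wmin < 0) (hbound : ∀ x, (Wmin : EReal) ≤ W x)
    (hloc : ∀ (x : Ed d) (r : ℝ), 0 < r →
      ∫⁻ y in Metric.ball x r, (W y).abs ∂volume < ⊤)
    (hsym : ∀ x, W (-x) = W x)
    (hlsc : LowerSemicontinuous W)
    (ρ : Measure (Ed d)) (hρ : IsMinimiser W ρ) :
    ∀ᵐ x ∂ρ, eInt ρ (fun y => W (x - y)) = ((2 : ℝ) : EReal) * energy W ρ :=
  eulerLagrange_global_general W hWmeas Wmin hWmin hbound hloc hsym ρ hρ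
end
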